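/- Let p, q, Q be probability measures on a measurable space, E and A events with Q(E) ≥ δ, Q(Aᶜ) ≤ δ/2, and suppose that on E ∩ A the likelihood ratio satisfies p(ω)/Q(ω) ≥ 2^{−K} pointwise (for atomic measures on a countable space). Then p(E) ≥ (δ/2)·2^{−K}. -/

import Mathlib

/-!
Split `E` into `E ∩ A` and `E \ A ⊆ Aᶜ`: the second piece has `Q`-mass at most `δ/2`, so `E ∩ A`
keeps `Q`-mass at least `δ/2`. On `E ∩ A` the likelihood-ratio bound gives `p ≥ 2^{-K} Q`
pointwise, hence `p(E) ≥ p(E ∩ A) ≥ 2^{-K} Q(E ∩ A) ≥ (δ/2) 2^{-K}`.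
-/

open Set

lemma summable_of_tsum_ne_zero {α M : Type*} [AddCommMonoid M] [TopologicalSpace M] {f : α → M}
    (h : ∑' a, f a ≠ 0) : Summable f := by
  by_contra hf
  exact h (tsum_eq_zero_of_not_summable hf)

/-- With `q = 0`, the division junk value `p / 0 = 0` rules out `0 < c ≤ p / q`. -/
lemma mul_le_of_le_div_of_nonneg {𝕜 : Type*} [Field 𝕜] [LinearOrder 𝕜] [IsStrictOrderedRing 𝕜]
    {c p q : 𝕜} (hc : 0 < c) (hq : 0 ≤ q) (h : c ≤ p / q) : c * q ≤ p := by
  rcases hq.eq_or_lt with rfl | hq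
  · rw [div_zero] at h
    exact absurd h hc.not_ge
  · exact (le_div_iff₀ hq).mp h

section SubsetSums

variable {α : Type*} {f g : α → ℝ}

lemma Summable.tsum_subtype_mono (hf : Summable f) (h0 : ∀ a, 0 ≤ f a) {s t : Set α}
    (hst : s ⊆ t) : ∑' a : s, f a ≤ ∑' a : t, f a :=
  (hf.subtype s).tsum_le_tsum_of_inj (inclusion hst) (inclusion_injective hst)
    (fun _ _ => h0 _) (fun _ => le_rfl) (hf.subtype t)

lemma Summable.tsum_subtype_le_tsum_inter_add_compl (hf : Summable f) (h0 : ∀ a, 0 ≤ f a)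
    (s t : Set α) : ∑' a : s, f a ≤ ∑' a : ↑(s ∩ t), f a + ∑' a : ↑tᶜ, f a := by
  have hsplit : ∑' a : s, f a = ∑' a : ↑(s ∩ t), f a + ∑' a : ↑(s \ t), f a := by
    rw [← Summable.tsum_union_disjoint disjoint_sdiff_inter.symm (hf.subtype _) (hf.subtype _),
      inter_union_sdiff]
  rw [hsplit]
  gcongr
  exact hf.tsum_subtype_mono h0 (sdiff_subset_compl s t)

lemma Summable.mul_tsum_subtype_le (hf : Summable f) (hg : Summable g) {c : ℝ} {s : Set α}
    (h : ∀ a ∈ s, c * f a ≤ g a) : c * ∑' a : s, f a ≤ ∑' a : s, g a := by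
  rw [← tsum_mul_left]
  exact ((hf.subtype s).mul_left c).tsum_le_tsum (fun a => h a a.2) (hg.subtype s)

end SubsetSums

theorem change_of_measure_bound {Ω : Type*}
    (p Q : Ω → ℝ) (hp : ∀ ω, 0 ≤ p ω) (hQ : ∀ ω, 0 ≤ Q ω)
    (hpsum : ∑' ω, p ω = 1) (hQsum : ∑' ω, Q ω = 1)
    (E A : Set Ω) (δ K : ℝ)
    (hQE : ∑' ω : E, Q ω ≥ δ)
    (hQA : ∑' ω : (Aᶜ : Set Ω), Q ω ≤ δ / 2)
    (hratio : ∀ ω ∈ E ∩ A, p ω / Q ω ≥ 2 ^ (-K)) :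
    ∑' ω : E, p ω ≥ (δ / 2) * 2 ^ (-K) := by
  have hp_summable : Summable p := summable_of_tsum_ne_zero (by rw [hpsum]; exact one_ne_zero)
  have hQ_summable : Summable Q := summable_of_tsum_ne_zero (by rw [hQsum]; exact one_ne_zero)
  have hc : (0 : ℝ) < 2 ^ (-K) := by positivity
  have hQEA : δ / 2 ≤ ∑' ω : ↑(E ∩ A), Q ω := by
    linarith [hQ_summable.tsum_subtype_le_tsum_inter_add_compl hQ E A]
  calc (δ / 2) * 2 ^ (-K) ≤ 2 ^ (-K) * ∑' ω : ↑(E ∩ A), Q ω := by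
        rw [mul_comm]; gcongr
    _ ≤ ∑' ω : ↑(E ∩ A), p ω :=
        hQ_summable.mul_tsum_subtype_le hp_summable fun ω hω =>
          mul_le_of_le_div_of_nonneg hc (hQ ω) (hratio ω hω)
    _ ≤ ∑' ω : E, p ω := hp_summable.tsum_subtype_mono hp inter_subset_left
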